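/- For d ≥ 2, the Holevo quantity χ(d) = log d + H(½ + 1/(2d²)) − H_min(d), with H(t) = −t log t − (1−t) log(1−t) and H_min(d) = −[((d+1)/(2d²))log((d+1)/(2d²)) + ((d−1)/(2d²))log((d−1)/(2d²)) + ((d−1)/d)log(1/(2d))], is strictly decreasing in d; in particular it is maximal at d = 2. -/

import Mathlib

/-- The closed-form Holevo information of the quantum SWITCH of two completely
depolarizing channels on a `d`-dimensional system with control in `|+⟩`,
as a function of a real variable `d`. -/
noncomputable def switchChi (d : ℝ) : ℝ :=
  Real.log d
    + (-(1 / 2 + 1 / (2 * d ^ 2)) * Real.log (1 / 2 + 1 / (2 * d ^ 2))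
       - (1 / 2 - 1 / (2 * d ^ 2)) * Real.log (1 / 2 - 1 / (2 * d ^ 2)))
    - (-((d + 1) / (2 * d ^ 2) * Real.log ((d + 1) / (2 * d ^ 2))
        + (d - 1) / (2 * d ^ 2) * Real.log ((d - 1) / (2 * d ^ 2))
        + (d - 1) / d * Real.log (1 / (2 * d))))

open Real Finset

/-!
With `x = 1 / d` all the logarithms of `d` cancel and `χ(d) = g(x)` for the elementary function
`g = switchChiRecip`, so it suffices that `g` is strictly increasing on `[0, 1/2]`. Its
derivative `((4x + 1) log(1 + x) + log(1 - x) - 2x log(1 + x²)) / 2` is positive on `(0, 1/2)`: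
bound `log(1 ± x)` from below by Taylor polynomials with an explicit remainder and
`log(1 + x²)` from above by `x²`; what remains is a polynomial inequality.
-/

noncomputable def switchChiRecip (x : ℝ) : ℝ :=
  ((1 + x) * (2 * x - 1) * log (1 + x) - (1 - x) * log (1 - x)
    - (1 + x ^ 2) * log (1 + x ^ 2)) / 2

lemma switchChi_eq_switchChiRecip_inv {d : ℝ} (hd : 1 < d) :
    switchChi d = switchChiRecip d⁻¹ := by
  obtain ⟨x, hx₀, hx₁, rfl⟩ : ∃ x : ℝ, 0 < x ∧ x < 1 ∧ d = x⁻¹ :=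
    ⟨d⁻¹, by positivity, inv_lt_one_of_one_lt₀ hd, (inv_inv d).symm⟩
  have hp : 0 < 1 + x := by linarith
  have hm : 0 < 1 - x := by linarith
  have hq : 0 < 1 + x ^ 2 := by positivity
  have e1 : 1 / 2 + 1 / (2 * x⁻¹ ^ 2) = (1 + x ^ 2) / 2 := by field_simp
  have e2 : 1 / 2 - 1 / (2 * x⁻¹ ^ 2) = (1 + x) * (1 - x) / 2 := by field_simp; ring
  have e3 : (x⁻¹ + 1) / (2 * x⁻¹ ^ 2) = x * (1 + x) / 2 := by field_simp
  have e4 : (x⁻¹ - 1) / (2 * x⁻¹ ^ 2) = x * (1 - x) / 2 := by field_simp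
  have e5 : (x⁻¹ - 1) / x⁻¹ = 1 - x := by field_simp
  have e6 : 1 / (2 * x⁻¹) = x / 2 := by field_simp
  rw [switchChi, switchChiRecip, inv_inv, e1, e2, e3, e4, e5, e6, log_inv,
    log_div hq.ne' two_ne_zero, log_div (by positivity) two_ne_zero,
    log_div (by positivity) two_ne_zero, log_div (by positivity) two_ne_zero,
    log_div hx₀.ne' two_ne_zero, log_mul hp.ne' hm.ne', log_mul hx₀.ne' hp.ne',
    log_mul hx₀.ne' hm.ne']
  ring

lemma neg_sum_sub_two_mul_pow_le_log_one_sub {x : ℝ} (hx : |x| ≤ 1 / 2) (n : ℕ) :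
    -∑ i ∈ range n, x ^ (i + 1) / (i + 1) - 2 * |x| ^ (n + 1) ≤ log (1 - x) := by
  have hrem : |x| ^ (n + 1) / (1 - |x|) ≤ 2 * |x| ^ (n + 1) := by
    rw [div_le_iff₀ (by linarith)]
    nlinarith [pow_nonneg (abs_nonneg x) (n + 1)]
  have := (abs_le.1 (abs_log_sub_add_sum_range_le (hx.trans_lt (by norm_num)) n)).1
  linarith

lemma switchChiRecip_deriv_pos {x : ℝ} (hx₀ : 0 < x) (hx₁ : x < 1 / 2) :
    0 < ((4 * x + 1) * log (1 + x) + log (1 - x) - 2 * x * log (1 + x ^ 2)) / 2 := by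
  have habs : |x| = x := abs_of_pos hx₀
  have hplus := neg_sum_sub_two_mul_pow_le_log_one_sub (x := -x) (by rw [abs_neg]; linarith) 5
  have hminus := neg_sum_sub_two_mul_pow_le_log_one_sub (x := x) (by rw [habs]; linarith) 4
  simp only [sum_range_succ, sum_range_zero, abs_neg, habs, sub_neg_eq_add] at hplus hminus
  norm_num at hplus hminus
  have hsq : log (1 + x ^ 2) ≤ x ^ 2 := by
    linarith [log_le_sub_one_of_pos (show (0 : ℝ) < 1 + x ^ 2 by positivity)]
  have h1 := mul_le_mul_of_nonneg_left hplus (by linarith : (0 : ℝ) ≤ 4 * x + 1)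
  have h2 := mul_le_mul_of_nonneg_left hsq (by linarith : (0 : ℝ) ≤ 2 * x)
  nlinarith [pow_pos hx₀ 2, pow_pos hx₀ 3, pow_pos hx₀ 4, pow_pos hx₀ 5, pow_pos hx₀ 6,
    mul_pos (mul_pos hx₀ hx₀) (sub_pos.2 hx₁)]

lemma hasDerivAt_switchChiRecip {x : ℝ} (hx₀ : -1 < x) (hx₁ : x < 1) :
    HasDerivAt switchChiRecip
      (((4 * x + 1) * log (1 + x) + log (1 - x) - 2 * x * log (1 + x ^ 2)) / 2) x := by
  have hp₀ : 1 + x ≠ 0 := by linarith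
  have hm₀ : 1 - x ≠ 0 := by linarith
  have hq₀ : 1 + x ^ 2 ≠ 0 := by positivity
  have hp : HasDerivAt (fun x : ℝ => 1 + x) 1 x := (hasDerivAt_id x).const_add 1
  have hm : HasDerivAt (fun x : ℝ => 1 - x) (-1) x := by
    simpa using (hasDerivAt_id x).const_sub 1
  have hq : HasDerivAt (fun x : ℝ => 1 + x ^ 2) (2 * x) x := by
    simpa using (hasDerivAt_pow 2 x).const_add 1
  have hl : HasDerivAt (fun x : ℝ => 2 * x - 1) 2 x := by
    simpa using ((hasDerivAt_id x).const_mul 2).sub_const 1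
  refine (((((hp.mul hl).mul (hp.log hp₀)).sub (hm.mul (hm.log hm₀))).sub
    (hq.mul (hq.log hq₀))).div_const 2).congr_deriv ?_
  simp only [Pi.mul_apply]
  field_simp
  ring

lemma switchChiRecip_strictMonoOn : StrictMonoOn switchChiRecip (Set.Icc 0 (1 / 2)) := by
  refine strictMonoOn_of_deriv_pos (convex_Icc _ _) (fun x hx => ?_) (fun x hx => ?_)
  · exact (hasDerivAt_switchChiRecip (by linarith [hx.1]) (by linarith [hx.2])).continuousAt
      |>.continuousWithinAt
  · rw [interior_Icc] at hx
    rw [(hasDerivAt_switchChiRecip (by linarith [hx.1]) (by linarith [hx.2])).deriv]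
    exact switchChiRecip_deriv_pos hx.1 hx.2

lemma switchChi_strictAntiOn : StrictAntiOn switchChi (Set.Ici 2) := by
  intro a (ha : 2 ≤ a) b (hb : 2 ≤ b) hab
  have mem_Icc {d : ℝ} (hd : 2 ≤ d) : d⁻¹ ∈ Set.Icc (0 : ℝ) (1 / 2) :=
    ⟨by positivity, one_div (2 : ℝ) ▸ inv_anti₀ two_pos hd⟩
  rw [switchChi_eq_switchChiRecip_inv (by linarith), switchChi_eq_switchChiRecip_inv (by linarith)]
  exact switchChiRecip_strictMonoOn (mem_Icc hb) (mem_Icc ha) (inv_strictAnti₀ (by linarith) hab)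

theorem switchChi_strictly_decreasing :
    (∀ m n : ℕ, 2 ≤ m → m < n → switchChi (n : ℝ) < switchChi (m : ℝ)) ∧
    (∀ n : ℕ, 2 ≤ n → switchChi (n : ℝ) ≤ switchChi 2) := by
  have hmem {n : ℕ} (hn : 2 ≤ n) : (n : ℝ) ∈ Set.Ici 2 :=
    Set.mem_Ici.2 (by exact_mod_cast hn)
  refine ⟨fun m n hm hmn => switchChi_strictAntiOn (hmem hm) (hmem (hm.trans hmn.le))
    (by exact_mod_cast hmn), fun n hn => ?_⟩
  exact switchChi_strictAntiOn.antitoneOn Set.self_mem_Ici (hmem hn) (by exact_mod_cast hn)
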